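/- Let p = (d_k, ..., d_0)_b be an (n,b,σ)-permutiple and let G_p be the directed graph on vertex set {0, 1, ..., b−1} with edge set E_p = { (d_j, d_{σ(j)}) : 0 ≤ j ≤ k }. Then (i) every edge of G_p is an edge of the (n,b)-mother graph M, i.e., (d_j + (b − n)·d_{σ(j)}) mod b ≤ n − 1 for all j; and (ii) every vertex of G_p having positive outdegree lies on a directed cycle of G_p (a closed directed walk in E_p whose vertices are pairwise distinct). Hence G_p is a union of cycles of M. -/

import Mathlib

/-!
(i) Multiplying `q = (d_{σ(k)}, …, d_{σ(0)})_b` by `n` digit by digit, the carry `c_j` into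
position `j` satisfies `c_j < n` and `c_j + n·d_{σ(j)} = c_{j+1}·b + d_j`, so
`d_j + (b - n)·d_{σ(j)} ≡ c_j (mod b)`.

(ii) The `σ`-orbit of a position `j` gives a closed walk `d_j → d_{σ(j)} → ⋯` in `G_p`; a shortest
closed walk through `d_j` has no repeated vertex, since otherwise cutting out the loop between
two visits would shorten it.
-/

open Finset

def digitValue (b : ℕ) (f : ℕ → ℕ) (j : ℕ) : ℕ := ∑ i ∈ range j, f i * b ^ i

/-- The carry into position `j` in the schoolbook multiplication of `n` by the numeral with
digits `g`. -/
def carry (n b : ℕ) (g : ℕ → ℕ) (j : ℕ) : ℕ := n * digitValue b g j / b ^ j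

section Digits

variable {b n j N : ℕ} {f g : ℕ → ℕ}

lemma digitValue_succ : digitValue b f (j + 1) = digitValue b f j + f j * b ^ j :=
  sum_range_succ _ _

lemma digitValue_lt_pow (hf : ∀ i < j, f i < b) : digitValue b f j < b ^ j := by
  induction j with
  | zero => simp [digitValue]
  | succ j ih =>
    have hlow := ih fun i hi => hf i (by omega)
    have htop := hf j (by omega)
    rw [digitValue_succ, pow_succ]
    nlinarith

lemma digitValue_modEq_of_le (hjN : j ≤ N) :
    digitValue b f N ≡ digitValue b f j [MOD b ^ j] := by
  induction N, hjN using Nat.le_induction with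
  | base => rfl
  | succ N hjN ih =>
    rw [digitValue_succ]
    have htop : f N * b ^ N ≡ 0 [MOD b ^ j] :=
      Nat.modEq_zero_iff_dvd.mpr <| (pow_dvd_pow b hjN).mul_left _
    simpa only [add_zero] using (htop.add_left (digitValue b f N)).trans ih

lemma carry_lt (hn : 0 < n) (hg : ∀ i < j, g i < b) : carry n b g j < n :=
  Nat.div_lt_of_lt_mul <| by
    rw [mul_comm (b ^ j)]
    exact Nat.mul_lt_mul_of_pos_left (digitValue_lt_pow hg) hn

lemma mul_digitValue_eq (hf : ∀ i < N, f i < b)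
    (hP : digitValue b f N = n * digitValue b g N) (hj : j ≤ N) :
    n * digitValue b g j = b ^ j * carry n b g j + digitValue b f j := by
  have hmod : n * digitValue b g j % b ^ j = digitValue b f j := by
    have hcong : n * digitValue b g j ≡ digitValue b f j [MOD b ^ j] := by
      have := (digitValue_modEq_of_le (b := b) (f := g) hj).mul_left n
      rw [← hP] at this
      exact this.symm.trans (digitValue_modEq_of_le hj)
    rw [hcong, Nat.mod_eq_of_lt (digitValue_lt_pow fun i hi => hf i (by omega))]
  rw [carry, ← hmod, Nat.div_add_mod]

lemma carry_add_mul_eq (hf : ∀ i < N, f i < b)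
    (hP : digitValue b f N = n * digitValue b g N) (hj : j < N) :
    carry n b g j + n * g j = carry n b g (j + 1) * b + f j := by
  have hpow : 0 < b ^ j := pow_pos ((Nat.zero_le _).trans_lt (hf j hj)) j
  have hlow := mul_digitValue_eq hf hP hj.le
  have hhigh := mul_digitValue_eq hf hP (Nat.succ_le_of_lt hj)
  rw [digitValue_succ, digitValue_succ, pow_succ] at hhigh
  refine Nat.eq_of_mul_eq_mul_right hpow ?_
  nlinarith

end Digits

lemma add_tsub_mul_mod_eq {b n c c' d e : ℕ} (h : c + n * e = c' * b + d) (hc : c < n)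
    (hnb : n ≤ b) : (d + (b - n) * e) % b = c := by
  have hsum : d + (b - n) * e + b * c' = c + b * e := by
    have : (b - n) * e + n * e = b * e := by rw [← add_mul, Nat.sub_add_cancel hnb]
    linarith
  rw [← Nat.add_mul_mod_self_left _ b c', hsum, Nat.add_mul_mod_self_left,
    Nat.mod_eq_of_lt (hc.trans_le hnb)]

section ClosedWalk

variable {α : Type*} (E : α → α → Prop)

/-- A closed walk of length `m` in the relation `E`, given as an `m`-periodic sequence of
vertices. -/
def IsClosedWalk (m : ℕ) (w : ℕ → α) : Prop :=
  0 < m ∧ Function.Periodic w m ∧ ∀ a, E (w a) (w (a + 1))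

variable {E} {m : ℕ} {w : ℕ → α}

lemma IsClosedWalk.shift (h : IsClosedWalk E m w) (t : ℕ) :
    IsClosedWalk E m fun i => w (i + t) := by
  obtain ⟨hm, hper, hE⟩ := h
  refine ⟨hm, fun i => ?_, fun i => ?_⟩
  · simpa only [add_right_comm] using hper (i + t)
  · simpa only [add_right_comm] using hE (i + t)

/-- The walk from the visit `c` once around to the visit `a + m` of the same vertex. -/
lemma IsClosedWalk.shortcut (h : IsClosedWalk E m w) {a c : ℕ} (hac : a < c) (hcm : c < m)
    (heq : w a = w c) : IsClosedWalk E (m - (c - a)) fun i => w (c + i % (m - (c - a))) := by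
  obtain ⟨hm, hper, hE⟩ := h
  set p := m - (c - a)
  have hp : 0 < p := by omega
  have hwrap : w (c + p) = w c := by
    rw [show c + p = a + m by omega, hper, heq]
  refine ⟨hp, fun i => by simp only [Nat.add_mod_right], fun i => ?_⟩
  suffices w (c + (i + 1) % p) = w (c + i % p + 1) by simpa only [this] using hE (c + i % p)
  rw [← Nat.mod_add_mod, add_assoc]
  have hle : i % p + 1 ≤ p := Nat.mod_lt i hp
  rcases hle.lt_or_eq with hlt | hlast
  · rw [Nat.mod_eq_of_lt hlt]
  · rw [hlast, Nat.mod_self, add_zero, hwrap]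

lemma IsClosedWalk.exists_injOn (h : IsClosedWalk E m w) (t : ℕ) :
    ∃ m' w', IsClosedWalk E m' w' ∧ Set.InjOn w' (Set.Iio m') ∧ ∃ i, w' i = w t := by
  induction m using Nat.strong_induction_on generalizing w t with
  | _ m ih =>
  set u := fun i => w (i + t)
  have hu : IsClosedWalk E m u := h.shift t
  by_cases hinj : Set.InjOn u (Set.Iio m)
  · exact ⟨m, u, hu, hinj, 0, by simp [u]⟩
  obtain ⟨a, c, hac, hcm, heq⟩ : ∃ a c, a < c ∧ c < m ∧ u a = u c := by
    simp only [Set.InjOn, Set.mem_Iio, not_forall] at hinj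
    obtain ⟨a, ha, c, hc, heq, hne⟩ := hinj
    rcases Nat.lt_or_gt_of_ne hne with hlt | hlt
    · exact ⟨a, c, hlt, hc, heq⟩
    · exact ⟨c, a, hlt, ha, heq.symm⟩
  have hvisit : u (c + (m - c) % (m - (c - a))) = w t := by
    rcases Nat.eq_zero_or_pos a with rfl | ha
    · simp [← heq, u]
    · rw [Nat.mod_eq_of_lt (by omega), Nat.add_sub_cancel' hcm.le, hu.2.1.eq]
      simp [u]
  obtain ⟨m', w', hw', hinj', i, hi⟩ := ih _ (by omega) (hu.shortcut hac hcm heq) (m - c)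
  exact ⟨m', w', hw', hinj', i, hi.trans hvisit⟩

end ClosedWalk

lemma isClosedWalk_perm_orbit {ι α : Type*} [Finite ι] (σ : Equiv.Perm ι) (d : ι → α) (j : ι) :
    IsClosedWalk (fun x y => ∃ i, (d i, d (σ i)) = (x, y)) (orderOf σ) fun a => d ((σ ^ a) j) := by
  refine ⟨orderOf_pos σ, fun a => ?_, fun a => ⟨(σ ^ a) j, ?_⟩⟩
  · simp only [pow_add, pow_orderOf_eq_one, mul_one]
  · simp only [pow_succ', Equiv.Perm.mul_apply]

section FinDigits

variable {N b : ℕ} (d : Fin N → ℕ)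

lemma Fin.extend_val_apply (j : Fin N) : Function.extend Fin.val d 0 j = d j :=
  Fin.val_injective.extend_apply _ _ _

lemma sum_mul_pow_eq_digitValue :
    ∑ j : Fin N, d j * b ^ (j : ℕ) = digitValue b (Function.extend Fin.val d 0) N := by
  simp only [digitValue, ← Fin.sum_univ_eq_sum_range, Fin.extend_val_apply]

lemma extend_val_lt_of_forall_lt (hd : ∀ j, d j < b) :
    ∀ i < N, Function.extend Fin.val d 0 i < b := fun i hi =>
  Fin.extend_val_apply d ⟨i, hi⟩ ▸ hd _

end FinDigits

theorem permutiple_graph_union_of_cycles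
    (n b k : ℕ) (hn : 1 < n) (hnb : n < b)
    (d : Fin (k + 1) → ℕ) (hd : ∀ j, d j < b)
    (σ : Equiv.Perm (Fin (k + 1)))
    (hperm : ∑ j : Fin (k + 1), d j * b ^ (j : ℕ)
      = n * ∑ j : Fin (k + 1), d (σ j) * b ^ (j : ℕ)) :
    -- (i) every edge of G_p is an edge of the (n,b)-mother graph
    (∀ j : Fin (k + 1), (d j + (b - n) * d (σ j)) % b ≤ n - 1) ∧
    -- (ii) every vertex of G_p with positive outdegree lies on a directed cycle of G_p
    (∀ v : ℕ, (∃ j : Fin (k + 1), d j = v) →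
      ∃ m : ℕ, 0 < m ∧ ∃ w : ℕ → ℕ,
        -- the vertices of the closed walk are pairwise distinct
        (∀ a < m, ∀ c < m, a ≠ c → w a ≠ w c) ∧
        -- each consecutive (cyclic) pair of vertices is an edge of G_p
        (∀ a < m, ∃ j : Fin (k + 1), (d j, d (σ j)) = (w a, w ((a + 1) % m))) ∧
        -- the cycle passes through v
        (∃ a < m, w a = v)) := by
  refine ⟨fun j => ?_, fun v ⟨j₀, hj₀⟩ => ?_⟩
  · simp only [sum_mul_pow_eq_digitValue] at hperm
    have hcarry_lt := carry_lt (zero_lt_one.trans hn) fun i hi =>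
      extend_val_lt_of_forall_lt (fun i => d (σ i)) (fun _ => hd _) i (hi.trans j.isLt)
    have hmod := add_tsub_mul_mod_eq
      (carry_add_mul_eq (extend_val_lt_of_forall_lt d hd) hperm j.isLt) hcarry_lt hnb.le
    rw [Fin.extend_val_apply, Fin.extend_val_apply] at hmod
    omega
  · obtain ⟨m, w, ⟨hm, hper, hE⟩, hinj, i, hi⟩ := (isClosedWalk_perm_orbit σ d j₀).exists_injOn 0
    refine ⟨m, hm, w, fun a ha c hc hne => hne ∘ hinj ha hc, fun a _ => ?_,
      i % m, Nat.mod_lt _ hm, ?_⟩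
    · rw [hper.map_mod_nat]
      exact hE a
    · rw [hper.map_mod_nat, hi, pow_zero, Equiv.Perm.one_apply, hj₀]
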